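/- arXiv:2505.07649 — 7 statements merged into one kernel-verified Lean document; each statement's English description precedes it below -/
import Mathlib

section
/- (Theorem 3.1, Part 2.) Let k be a positive integer, let φ : (0,∞) → ℝ be continuous, and let z : (0,∞) → ℝ be twice differentiable with z(u) ≠ 0 for all u > 0, satisfying z″(u) + ((k−1)/u)·z′(u) − (φ(u)/2)·z(u) = 0 for all u > 0. Define F(u) := z(u)² · u^{(k−1)/2} · exp(u²/2). Then Q_k[F](u) = φ(u) for all u > 0; in particular, if φ(u) ≤ 0 for all u > 0 then F satisfies Q_k[F](u) ≤ 0 for all u > 0, where Q_k[F](u) := F″(u)/F(u) − (1/2)(F′(u)/F(u))² + (F′(u)/F(u))·((k−1)/(2u) − u) + (k−1)(7−3k)/(8u²) + u²/2 − (k+1)/2. -/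
open Real

/-- The Riccati-type expression `Q_k[F](u)` of the paper. -/
noncomputable def Q (k : ℕ) (F : ℝ → ℝ) (u : ℝ) : ℝ :=
  deriv (deriv F) u / F u - (1 / 2) * (deriv F u / F u) ^ 2
    + (deriv F u / F u) * ((k - 1) / (2 * u) - u)
    + (k - 1) * (7 - 3 * k) / (8 * u ^ 2) + u ^ 2 / 2 - (k + 1) / 2

/-!
Write `F = z² · u^a · e^{u²/2}` with `a = (k-1)/2` and let `L = F'/F = 2z'/z + a/u + u` be its
logarithmic derivative. Since `F''/F = L' + L²`, the expression `Q_k[F]` only involves `L` and `L'`,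
and `L'` contains `z''/z`, which the ODE replaces by `φ/2 - (k-1)/u · z'/z`. All terms in `z'/z`
then cancel, as do the powers of `u`, and what is left is `φ`.
-/

open Filter Topology

theorem Q_eq_of_hasDerivAt_mul {k : ℕ} {F L : ℝ → ℝ} {u L' : ℝ}
    (hF : ∀ᶠ x in 𝓝 u, HasDerivAt F (F x * L x) x) (hL : HasDerivAt L L' u) (hFu : F u ≠ 0) :
    Q k F u = L' + L u ^ 2 / 2 + L u * ((k - 1) / (2 * u) - u)
      + (k - 1) * (7 - 3 * k) / (8 * u ^ 2) + u ^ 2 / 2 - (k + 1) / 2 := by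
  have hF' : deriv F =ᶠ[𝓝 u] fun x => F x * L x := hF.mono fun x hx => hx.deriv
  have hF'' : deriv (deriv F) u = F u * L u * L u + F u * L' := by
    rw [hF'.deriv_eq]
    exact (hF.self_of_nhds.mul hL).deriv
  rw [Q, hF'', hF'.self_of_nhds]
  field_simp
  ring

theorem hasDerivAt_sq_mul_rpow_mul_exp {z : ℝ → ℝ} {z' x : ℝ} (a : ℝ) (hz : HasDerivAt z z' x)
    (hzx : z x ≠ 0) (hx : 0 < x) :
    HasDerivAt (fun y => z y ^ 2 * y ^ a * exp (y ^ 2 / 2))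
      (z x ^ 2 * x ^ a * exp (x ^ 2 / 2) * (2 * z' / z x + a / x + x)) x := by
  have hexp : HasDerivAt (fun y => exp (y ^ 2 / 2)) (exp (x ^ 2 / 2) * x) x := by
    simpa using ((hasDerivAt_pow 2 x).div_const 2).exp
  refine (((hz.fun_pow 2).fun_mul (hasDerivAt_rpow_const (p := a) (Or.inl hx.ne'))).fun_mul
    hexp).congr_deriv ?_
  rw [rpow_sub_one hx.ne']
  field_simp
  ring

theorem hasDerivAt_two_mul_logDeriv_add {z : ℝ → ℝ} {u : ℝ} (a : ℝ)
    (hz : DifferentiableAt ℝ z u) (hz' : DifferentiableAt ℝ (deriv z) u) (hzu : z u ≠ 0)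
    (hu : u ≠ 0) :
    HasDerivAt (fun x => 2 * deriv z x / z x + a / x + x)
      (2 * ((deriv (deriv z) u * z u - deriv z u * deriv z u) / z u ^ 2) - a / u ^ 2 + 1) u := by
  have hlog := (hz'.hasDerivAt.const_mul 2).fun_div hz.hasDerivAt hzu
  have hinv := (hasDerivAt_const u a).fun_div (hasDerivAt_id' u) hu
  refine ((hlog.fun_add hinv).fun_add (hasDerivAt_id' u)).congr_deriv ?_
  ring

theorem stmt6_general (k : ℕ) (φ : ℝ → ℝ)
    (z : ℝ → ℝ)
    (hz : ∀ u > (0 : ℝ), DifferentiableAt ℝ z u ∧ DifferentiableAt ℝ (deriv z) u)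
    (hz0 : ∀ u > (0 : ℝ), z u ≠ 0)
    (hode : ∀ u > (0 : ℝ),
      deriv (deriv z) u + ((k - 1) / u) * deriv z u - (φ u / 2) * z u = 0)
    (F : ℝ → ℝ)
    (hF : ∀ u : ℝ, F u = z u ^ 2 * u ^ (((k : ℝ) - 1) / 2) * Real.exp (u ^ 2 / 2)) :
    (∀ u > (0 : ℝ), Q k F u = φ u) ∧
    ((∀ u > (0 : ℝ), φ u ≤ 0) → ∀ u > (0 : ℝ), Q k F u ≤ 0) := by
  have hQ : ∀ u > (0 : ℝ), Q k F u = φ u := by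
    intro u hu
    obtain rfl : F = fun y => z y ^ 2 * y ^ (((k : ℝ) - 1) / 2) * exp (y ^ 2 / 2) := funext hF
    have hFu : z u ^ 2 * u ^ (((k : ℝ) - 1) / 2) * exp (u ^ 2 / 2) ≠ 0 := by
      have := hz0 u hu
      positivity
    have hFL := eventually_of_mem (Ioi_mem_nhds hu) fun x hx =>
      hasDerivAt_sq_mul_rpow_mul_exp (((k : ℝ) - 1) / 2) (hz x hx).1.hasDerivAt (hz0 x hx) hx
    rw [Q_eq_of_hasDerivAt_mul hFL
      (hasDerivAt_two_mul_logDeriv_add _ (hz u hu).1 (hz u hu).2 (hz0 u hu) hu.ne') hFu]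
    have hz'' : deriv (deriv z) u = φ u / 2 * z u - (k - 1) / u * deriv z u := by
      linarith [hode u hu]
    rw [hz'']
    field_simp [hz0 u hu]
    ring
  exact ⟨hQ, fun hφ u hu => (hQ u hu).trans_le (hφ u hu)⟩

theorem stmt6 (k : ℕ) (hk : 0 < k) (φ : ℝ → ℝ)
    (hφ : ContinuousOn φ (Set.Ioi (0 : ℝ)))
    (z : ℝ → ℝ)
    (hz : ∀ u > (0 : ℝ), DifferentiableAt ℝ z u ∧ DifferentiableAt ℝ (deriv z) u)
    (hz0 : ∀ u > (0 : ℝ), z u ≠ 0)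
    (hode : ∀ u > (0 : ℝ),
      deriv (deriv z) u + ((k - 1) / u) * deriv z u - (φ u / 2) * z u = 0)
    (F : ℝ → ℝ)
    (hF : ∀ u : ℝ, F u = z u ^ 2 * u ^ (((k : ℝ) - 1) / 2) * Real.exp (u ^ 2 / 2)) :
    (∀ u > (0 : ℝ), Q k F u = φ u) ∧
    ((∀ u > (0 : ℝ), φ u ≤ 0) → ∀ u > (0 : ℝ), Q k F u ≤ 0) :=
  stmt6_general k φ z hz hz0 hode F hF
end

section
/- Let k ≥ 3 be an integer and let b be a real number with 0 ≤ b ≤ (k−2)²/4. Set ρ₁ = (2−k−√((k−2)²−4b))/2 and ρ₂ = (2−k+√((k−2)²−4b))/2, and let A₁ ≥ 0, A₂ ≥ 0 with A₁ + A₂ > 0. Then z(u) := A₁·u^{ρ₁} + A₂·u^{ρ₂} satisfies z″(u) + ((k−1)/u)·z′(u) + (b/u²)·z(u) = 0 and z(u) > 0 for all u > 0, and the function F(u) := z(u)² · u^{(k−1)/2} · exp(u²/2) satisfies Q_k[F](u) = −2b/u² ≤ 0 for all u > 0, where Q_k[F](u) := F″(u)/F(u) − (1/2)(F′(u)/F(u))²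 + (F′(u)/F(u))·((k−1)/(2u) − u) + (k−1)(7−3k)/(8u²) + u²/2 − (k+1)/2. -/
open Real

set_option maxHeartbeats 1000000 in
private lemma key_alg (kk u w v zz Fu b : ℝ) (hu : u ≠ 0) (hzz : zz ≠ 0) (hFu : Fu ≠ 0)
    (hODE : v + (kk - 1) / u * w + b / u ^ 2 * zz = 0) :
    ((2 * ((v * zz - w * w) / zz ^ 2) + (kk - 1) / 2 * -(u ^ 2)⁻¹ + 1) * Fu +
          (2 * (w / zz) + (kk - 1) / 2 / u + u) * ((2 * (w / zz) + (kk - 1) / 2 / u + u) * Fu)) /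
        Fu -
      1 / 2 * ((2 * (w / zz) + (kk - 1) / 2 / u + u) * Fu / Fu) ^ 2 +
      (2 * (w / zz) + (kk - 1) / 2 / u + u) * Fu / Fu * ((kk - 1) / (2 * u) - u) +
      (kk - 1) * (7 - 3 * kk) / (8 * u ^ 2) + u ^ 2 / 2 - (kk + 1) / 2 = -2 * b / u ^ 2 := by
  have hv : v = -((kk - 1) / u * w + b / u ^ 2 * zz) := by linarith
  subst hv
  field_simp
  ring

set_option maxHeartbeats 1000000 in
theorem stmt7 (k : ℕ) (hk : 3 ≤ k) (b : ℝ) (hb0 : 0 ≤ b)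
    (hb1 : b ≤ ((k : ℝ) - 2) ^ 2 / 4)
    (ρ₁ ρ₂ : ℝ)
    (hρ₁ : ρ₁ = (2 - (k : ℝ) - Real.sqrt (((k : ℝ) - 2) ^ 2 - 4 * b)) / 2)
    (hρ₂ : ρ₂ = (2 - (k : ℝ) + Real.sqrt (((k : ℝ) - 2) ^ 2 - 4 * b)) / 2)
    (A₁ A₂ : ℝ) (hA₁ : 0 ≤ A₁) (hA₂ : 0 ≤ A₂) (hA : 0 < A₁ + A₂)
    (z : ℝ → ℝ) (hz : ∀ u : ℝ, z u = A₁ * u ^ ρ₁ + A₂ * u ^ ρ₂)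
    (F : ℝ → ℝ)
    (hF : ∀ u : ℝ, F u = z u ^ 2 * u ^ (((k : ℝ) - 1) / 2) * Real.exp (u ^ 2 / 2)) :
    ∀ u > (0 : ℝ),
      deriv (deriv z) u + ((k - 1) / u) * deriv z u + (b / u ^ 2) * z u = 0 ∧
      0 < z u ∧
      Q k F u = -2 * b / u ^ 2 ∧
      -2 * b / u ^ 2 ≤ 0 := by
  have hzf : z = fun u => A₁ * u ^ ρ₁ + A₂ * u ^ ρ₂ := funext hz
  have hs2 : Real.sqrt (((k:ℝ)-2)^2 - 4*b) ^ 2 = ((k:ℝ)-2)^2 - 4*b :=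
    Real.sq_sqrt (by linarith)
  have hI1 : ρ₁ ^ 2 + ((k:ℝ) - 2) * ρ₁ + b = 0 := by rw [hρ₁]; nlinarith [hs2]
  have hI2 : ρ₂ ^ 2 + ((k:ℝ) - 2) * ρ₂ + b = 0 := by rw [hρ₂]; nlinarith [hs2]
  set c : ℝ := ((k:ℝ) - 1) / 2 with hc
  set Z1 : ℝ → ℝ := fun x => A₁ * (ρ₁ * x ^ (ρ₁ - 1)) + A₂ * (ρ₂ * x ^ (ρ₂ - 1)) with hZ1def
  set Z2 : ℝ → ℝ := fun x =>
    A₁ * (ρ₁ * ((ρ₁ - 1) * x ^ (ρ₁ - 1 - 1))) + A₂ * (ρ₂ * ((ρ₂ - 1) * x ^ (ρ₂ - 1 - 1)))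
    with hZ2def
  have hdz : ∀ x : ℝ, x ≠ 0 → HasDerivAt z (Z1 x) x := by
    intro x hx
    rw [hzf]
    exact ((Real.hasDerivAt_rpow_const (Or.inl hx)).const_mul A₁).add
      ((Real.hasDerivAt_rpow_const (Or.inl hx)).const_mul A₂)
  have hdZ1 : ∀ x : ℝ, x ≠ 0 → HasDerivAt Z1 (Z2 x) x := by
    intro x hx
    exact (((Real.hasDerivAt_rpow_const (Or.inl hx)).const_mul ρ₁).const_mul A₁).add
      (((Real.hasDerivAt_rpow_const (Or.inl hx)).const_mul ρ₂).const_mul A₂)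
  have hzpos : ∀ x : ℝ, 0 < x → 0 < z x := by
    intro x hx
    rw [hz x]
    have hp1 : 0 < x ^ ρ₁ := Real.rpow_pos_of_pos hx ρ₁
    have hp2 : 0 < x ^ ρ₂ := Real.rpow_pos_of_pos hx ρ₂
    rcases hA₁.lt_or_eq with h | h
    · nlinarith [mul_pos h hp1, mul_nonneg hA₂ hp2.le]
    · have h2 : 0 < A₂ := by linarith
      nlinarith [mul_pos h2 hp2, mul_nonneg hA₁ hp1.le]
  have hexp : ∀ x : ℝ, HasDerivAt (fun y : ℝ => Real.exp (y ^ 2 / 2))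
      (x * Real.exp (x ^ 2 / 2)) x := by
    intro x
    have h1 : HasDerivAt (fun y : ℝ => y ^ 2 / 2) x x := by
      have := (hasDerivAt_pow 2 x).div_const 2
      norm_num at this
      simpa using this
    have := h1.exp
    simpa [mul_comm] using this
  have hFf : F = fun x => z x ^ 2 * x ^ c * Real.exp (x ^ 2 / 2) := funext hF
  set H : ℝ → ℝ := fun x => 2 * (Z1 x / z x) + c / x + x with hHdef
  have hdF : ∀ x : ℝ, 0 < x → HasDerivAt F (H x * F x) x := by
    intro x hx
    have hxne : x ≠ 0 := ne_of_gt hx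
    have h1 : HasDerivAt (fun y => z y ^ 2) (2 * z x * Z1 x) x := by
      have := (hdz x hxne).pow 2
      norm_num at this
      exact this
    have h2 : HasDerivAt (fun y : ℝ => y ^ c) (c * x ^ (c - 1)) x :=
      Real.hasDerivAt_rpow_const (Or.inl hxne)
    have hD : HasDerivAt F
        ((2 * z x * Z1 x * x ^ c + z x ^ 2 * (c * x ^ (c - 1))) * Real.exp (x ^ 2 / 2)
          + z x ^ 2 * x ^ c * (x * Real.exp (x ^ 2 / 2))) x := by
      rw [hFf]
      exact ((h1.mul h2).mul (hexp x))
    convert hD using 1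
    have ec : x ^ (c - 1) = x ^ c / x := by
      rw [Real.rpow_sub hx, Real.rpow_one]
    rw [hF x, hHdef, ec]
    have hzx := (hzpos x hx).ne'
    field_simp
  intro u hu
  have hun : u ≠ 0 := ne_of_gt hu
  have hzu := hzpos u hu
  -- derivatives of z at u
  have hdevz : deriv z =ᶠ[nhds u] Z1 :=
    Filter.eventuallyEq_of_mem (compl_singleton_mem_nhds hun) (fun x hx => (hdz x hx).deriv)
  have hd1z : deriv z u = Z1 u := (hdz u hun).deriv
  have hd2z : deriv (deriv z) u = Z2 u := by
    rw [hdevz.deriv_eq]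
    exact (hdZ1 u hun).deriv
  -- rpow identities at u
  have e1 : u ^ (ρ₁ - 1) = u ^ ρ₁ / u := by rw [Real.rpow_sub hu, Real.rpow_one]
  have e2 : u ^ (ρ₂ - 1) = u ^ ρ₂ / u := by rw [Real.rpow_sub hu, Real.rpow_one]
  have e1' : u ^ (ρ₁ - 1 - 1) = u ^ ρ₁ / u ^ 2 := by
    rw [show ρ₁ - 1 - 1 = ρ₁ - (2:ℕ) by push_cast; ring, Real.rpow_sub hu,
      Real.rpow_natCast]
  have e2' : u ^ (ρ₂ - 1 - 1) = u ^ ρ₂ / u ^ 2 := by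
    rw [show ρ₂ - 1 - 1 = ρ₂ - (2:ℕ) by push_cast; ring, Real.rpow_sub hu,
      Real.rpow_natCast]
  have hODE : Z2 u + ((k:ℝ) - 1) / u * Z1 u + b / u ^ 2 * z u = 0 := by
    rw [hz u, hZ1def, hZ2def]
    simp only
    rw [e1, e2, e1', e2']
    have h1 : u ^ ρ₁ ≠ 0 := (Real.rpow_pos_of_pos hu ρ₁).ne'
    linear_combination (A₁ * u ^ ρ₁ / u ^ 2) * hI1 + (A₂ * u ^ ρ₂ / u ^ 2) * hI2
  refine ⟨by rw [hd1z, hd2z]; exact hODE, hzu, ?_, ?_⟩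
  · -- the Q computation
    have hFu : 0 < F u := by
      rw [hF u]
      exact mul_pos (mul_pos (pow_pos hzu 2) (Real.rpow_pos_of_pos hu c)) (Real.exp_pos _)
    have hd1F : deriv F u = H u * F u := (hdF u hu).deriv
    have hdevF : deriv F =ᶠ[nhds u] fun x => H x * F x :=
      Filter.eventuallyEq_of_mem (Ioi_mem_nhds hu) (fun x hx => (hdF x hx).deriv)
    have hq : HasDerivAt (fun y => Z1 y / z y) ((Z2 u * z u - Z1 u * Z1 u) / z u ^ 2) u :=
      (hdZ1 u hun).div (hdz u hun) hzu.ne'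
    have hci : HasDerivAt (fun y : ℝ => c / y) (c * -(u ^ 2)⁻¹) u := by
      simpa [div_eq_mul_inv] using (hasDerivAt_inv hun).const_mul c
    have hH : HasDerivAt H
        (2 * ((Z2 u * z u - Z1 u * Z1 u) / z u ^ 2) + c * -(u ^ 2)⁻¹ + 1) u := by
      rw [hHdef]
      exact ((hq.const_mul 2).add hci).add (hasDerivAt_id u)
    have hd2F : deriv (deriv F) u
        = (2 * ((Z2 u * z u - Z1 u * Z1 u) / z u ^ 2) + c * -(u ^ 2)⁻¹ + 1) * F u
          + H u * (H u * F u) := by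
      rw [hdevF.deriv_eq]
      exact (hH.mul (hdF u hu)).deriv
    have hZ2u : Z2 u = -(((k:ℝ) - 1) / u * Z1 u + b / u ^ 2 * z u) := by linarith
    rw [Q, hd1F, hd2F, hHdef]
    simp only
    rw [hc]
    clear_value c Z1 Z2 H
    exact key_alg (k : ℝ) u (Z1 u) (Z2 u) (z u) (F u) b hun hzu.ne' hFu.ne' hODE
  · have : (0:ℝ) < u ^ 2 := by positivity
    rw [div_nonpos_iff]
    right
    constructor <;> nlinarith
end

section
/- (Corollary 4.1, Part 1.) Let k be a positive integer and let f : (0,1) → [0,∞) be measurable with 0 < ∫₀^1 f(t) dt < ∞. Define G(s) = ∫₀^1 f(t) e^{−st} dt for s > 0. Then G is infinitely differentiable with G(s) > 0 and G′(s) < 0 for all s > 0, and if G′(s)/G(s) − 2·G″(s)/G′(s) ≤ k/s for all s > 0, then the function m : ℝ^k → ℝ defined by m(x) = G(‖x‖²/2) satisfies Δ√(m)(x) ≤ 0 for every x ∈ ℝ^k with x ≠ 0. -/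
open Real MeasureTheory


private noncomputable def Gaux (f : ℝ → ℝ) (n : ℕ) (s : ℝ) : ℝ :=
  ∫ t in Set.Ioo (0:ℝ) 1, f t * (-t)^n * Real.exp (-s*t)

private lemma Gaux_int (f : ℝ → ℝ) (hfmeas : Measurable f)
    (hfint : IntegrableOn f (Set.Ioo (0 : ℝ) 1)) (n : ℕ) (s : ℝ) :
    IntegrableOn (fun t => f t * (-t)^n * Real.exp (-s*t)) (Set.Ioo (0:ℝ) 1) := by
  apply Integrable.mono' (g := fun t => |f t| * Real.exp |s|) (hfint.abs.mul_const _)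
  · exact ((hfmeas.mul ((measurable_id.neg.pow_const n))).mul
      ((measurable_id.const_mul (-s)).exp.comp measurable_id)).aestronglyMeasurable
  · rw [ae_restrict_iff' measurableSet_Ioo]
    filter_upwards with t ht
    obtain ⟨ht0, ht1⟩ := ht
    have h1 : |(-t)^n| ≤ 1 := by
      rw [abs_pow, abs_neg, abs_of_pos ht0]
      exact pow_le_one₀ ht0.le ht1.le
    have h2 : Real.exp (-s*t) ≤ Real.exp |s| := by
      apply Real.exp_le_exp.mpr
      calc -s*t ≤ |(-s)*t| := le_abs_self _
        _ = |s| * t := by rw [abs_mul, abs_neg, abs_of_pos ht0]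
        _ ≤ |s| * 1 := by nlinarith [abs_nonneg s]
        _ = |s| := mul_one _
    calc ‖f t * (-t)^n * Real.exp (-s*t)‖ = |f t| * |(-t)^n| * Real.exp (-s*t) := by
          rw [norm_mul, norm_mul]; simp [abs_of_pos (Real.exp_pos _)]
      _ ≤ |f t| * 1 * Real.exp |s| := by
          apply mul_le_mul (by nlinarith [abs_nonneg (f t), abs_nonneg ((-t)^n)]) h2
            (Real.exp_pos _).le (by positivity)
      _ = |f t| * Real.exp |s| := by ring

private lemma Gaux_hasDerivAt (f : ℝ → ℝ) (hfmeas : Measurable f)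
    (hfint : IntegrableOn f (Set.Ioo (0 : ℝ) 1)) (n : ℕ) (s₀ : ℝ) :
    HasDerivAt (Gaux f n) (Gaux f (n+1) s₀) s₀ := by
  have key := hasDerivAt_integral_of_dominated_loc_of_deriv_le (μ := volume.restrict (Set.Ioo (0:ℝ) 1))
    (F := fun s t => f t * (-t)^n * Real.exp (-s*t))
    (F' := fun s t => f t * (-t)^(n+1) * Real.exp (-s*t))
    (bound := fun t => |f t| * Real.exp (|s₀|+1))
    (x₀ := s₀) (s := Metric.ball s₀ 1) (Metric.ball_mem_nhds s₀ one_pos)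
    (Filter.Eventually.of_forall fun s => (Gaux_int f hfmeas hfint n s).aestronglyMeasurable)
    (Gaux_int f hfmeas hfint n s₀)
    (Gaux_int f hfmeas hfint (n+1) s₀).aestronglyMeasurable
    ?_ (hfint.abs.mul_const _) ?_
  · exact key.2
  · rw [ae_restrict_iff' measurableSet_Ioo]
    filter_upwards with t ht s hs
    obtain ⟨ht0, ht1⟩ := ht
    have h1 : |(-t)^(n+1)| ≤ 1 := by
      rw [abs_pow, abs_neg, abs_of_pos ht0]
      exact pow_le_one₀ ht0.le ht1.le
    have hs' : |s| < |s₀| + 1 := by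
      have := Metric.mem_ball.mp hs
      rw [Real.dist_eq] at this
      calc |s| = |s₀ + (s - s₀)| := by ring_nf
        _ ≤ |s₀| + |s - s₀| := abs_add_le _ _
        _ < |s₀| + 1 := by linarith
    have h2 : Real.exp (-s*t) ≤ Real.exp (|s₀|+1) := by
      apply Real.exp_le_exp.mpr
      calc -s*t ≤ |(-s)*t| := le_abs_self _
        _ = |s| * t := by rw [abs_mul, abs_neg, abs_of_pos ht0]
        _ ≤ |s| * 1 := by nlinarith [abs_nonneg s]
        _ ≤ |s₀| + 1 := by rw [mul_one]; linarith
    calc ‖f t * (-t)^(n+1) * Real.exp (-s*t)‖ = |f t| * |(-t)^(n+1)| * Real.exp (-s*t) := by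
          rw [norm_mul, norm_mul]; simp [abs_of_pos (Real.exp_pos _)]
      _ ≤ |f t| * 1 * Real.exp (|s₀|+1) := by
          apply mul_le_mul (by nlinarith [abs_nonneg (f t), abs_nonneg ((-t)^(n+1))]) h2
            (Real.exp_pos _).le (by positivity)
      _ = |f t| * Real.exp (|s₀|+1) := by ring
  · filter_upwards with t s _
    have h : HasDerivAt (fun s => Real.exp (-s*t)) (Real.exp (-s*t) * (-t)) s := by
      have h0 : HasDerivAt (fun s : ℝ => -s*t) (-t) s := by
        simpa using ((hasDerivAt_id s).neg.mul_const t)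
      exact h0.exp
    have := h.const_mul (f t * (-t)^n)
    refine this.congr_deriv ?_
    ring


private lemma Gc_int (f : ℝ → ℝ) (hfmeas : Measurable f)
    (hfint : IntegrableOn f (Set.Ioo (0 : ℝ) 1)) (n : ℕ) (z : ℂ) :
    IntegrableOn (fun t : ℝ => (f t : ℂ) * (-(t:ℂ))^n * Complex.exp (-z*t)) (Set.Ioo (0:ℝ) 1) := by
  apply Integrable.mono' (g := fun t => |f t| * Real.exp ‖z‖) (hfint.abs.mul_const _)
  · apply AEStronglyMeasurable.mul
    · apply AEStronglyMeasurable.mul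
      · exact (Complex.measurable_ofReal.comp hfmeas).aestronglyMeasurable
      · exact (Complex.measurable_ofReal.neg.pow_const n).aestronglyMeasurable
    · exact (Complex.measurable_exp.comp
        ((Complex.measurable_ofReal.const_mul (-z)))).aestronglyMeasurable
  · rw [ae_restrict_iff' measurableSet_Ioo]
    filter_upwards with t ht
    obtain ⟨ht0, ht1⟩ := ht
    have h1 : ‖(-(t:ℂ))^n‖ ≤ 1 := by
      rw [norm_pow, norm_neg, Complex.norm_real, Real.norm_of_nonneg ht0.le]
      exact pow_le_one₀ ht0.le ht1.le
    have h2 : ‖Complex.exp (-z*t)‖ ≤ Real.exp ‖z‖ := by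
      rw [Complex.norm_exp]
      apply Real.exp_le_exp.mpr
      calc (-z*(t:ℂ)).re ≤ |(-z*(t:ℂ)).re| := le_abs_self _
        _ ≤ ‖-z*(t:ℂ)‖ := Complex.abs_re_le_norm _
        _ = ‖z‖ * t := by rw [norm_mul, norm_neg, Complex.norm_real, Real.norm_of_nonneg ht0.le]
        _ ≤ ‖z‖ * 1 := by nlinarith [norm_nonneg z]
        _ = ‖z‖ := mul_one _
    calc ‖(f t : ℂ) * (-(t:ℂ))^n * Complex.exp (-z*t)‖
        = |f t| * (‖(-(t:ℂ))^n‖ * ‖Complex.exp (-z*t)‖) := by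
          rw [norm_mul, norm_mul, Complex.norm_real, Real.norm_eq_abs]; ring
      _ ≤ |f t| * (1 * Real.exp ‖z‖) := by
          apply mul_le_mul_of_nonneg_left _ (abs_nonneg _)
          exact mul_le_mul h1 h2 (norm_nonneg _) zero_le_one
      _ = |f t| * Real.exp ‖z‖ := by ring

private lemma Gc_diff (f : ℝ → ℝ) (hfmeas : Measurable f)
    (hfint : IntegrableOn f (Set.Ioo (0 : ℝ) 1)) :
    Differentiable ℂ (fun z : ℂ => ∫ t in Set.Ioo (0:ℝ) 1, (f t : ℂ) * Complex.exp (-z*t)) := by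
  intro z₀
  have key := hasDerivAt_integral_of_dominated_loc_of_deriv_le
    (μ := volume.restrict (Set.Ioo (0:ℝ) 1))
    (F := fun (z : ℂ) (t : ℝ) => (f t : ℂ) * Complex.exp (-z*t))
    (F' := fun (z : ℂ) (t : ℝ) => (f t : ℂ) * (-(t:ℂ)) * Complex.exp (-z*t))
    (bound := fun t => |f t| * Real.exp (‖z₀‖+1))
    (x₀ := z₀) (s := Metric.ball z₀ 1) (Metric.ball_mem_nhds z₀ one_pos)
    (Filter.Eventually.of_forall fun z => by
      simpa using (Gc_int f hfmeas hfint 0 z).aestronglyMeasurable)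
    (by simpa [IntegrableOn] using Gc_int f hfmeas hfint 0 z₀)
    (by simpa using (Gc_int f hfmeas hfint 1 z₀).aestronglyMeasurable)
    ?_ (hfint.abs.mul_const _) ?_
  · exact key.2.differentiableAt
  · rw [ae_restrict_iff' measurableSet_Ioo]
    filter_upwards with t ht z hz
    obtain ⟨ht0, ht1⟩ := ht
    have h1 : ‖-(t:ℂ)‖ ≤ 1 := by
      rw [norm_neg, Complex.norm_real, Real.norm_of_nonneg ht0.le]
      exact ht1.le
    have hz' : ‖z‖ < ‖z₀‖ + 1 := by
      have := Metric.mem_ball.mp hz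
      rw [dist_eq_norm] at this
      calc ‖z‖ = ‖z₀ + (z - z₀)‖ := by ring_nf
        _ ≤ ‖z₀‖ + ‖z - z₀‖ := norm_add_le _ _
        _ < ‖z₀‖ + 1 := by linarith
    have h2 : ‖Complex.exp (-z*t)‖ ≤ Real.exp (‖z₀‖+1) := by
      rw [Complex.norm_exp]
      apply Real.exp_le_exp.mpr
      calc (-z*(t:ℂ)).re ≤ |(-z*(t:ℂ)).re| := le_abs_self _
        _ ≤ ‖-z*(t:ℂ)‖ := Complex.abs_re_le_norm _
        _ = ‖z‖ * t := by rw [norm_mul, norm_neg, Complex.norm_real, Real.norm_of_nonneg ht0.le]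
        _ ≤ ‖z‖ * 1 := by nlinarith [norm_nonneg z]
        _ ≤ ‖z₀‖ + 1 := by rw [mul_one]; linarith
    calc ‖(f t : ℂ) * (-(t:ℂ)) * Complex.exp (-z*t)‖
        = |f t| * (‖-(t:ℂ)‖ * ‖Complex.exp (-z*t)‖) := by
          rw [norm_mul, norm_mul, Complex.norm_real, Real.norm_eq_abs]; ring
      _ ≤ |f t| * (1 * Real.exp (‖z₀‖+1)) := by
          apply mul_le_mul_of_nonneg_left _ (abs_nonneg _)
          exact mul_le_mul h1 h2 (norm_nonneg _) zero_le_one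
      _ = |f t| * Real.exp (‖z₀‖+1) := by ring
  · filter_upwards with t z _
    have h0 : HasDerivAt (fun z : ℂ => -z*(t:ℂ)) (-(t:ℂ)) z := by
      simpa using ((hasDerivAt_id z).neg.mul_const (t:ℂ))
    have h : HasDerivAt (fun z : ℂ => Complex.exp (-z*t)) (Complex.exp (-z*t) * (-t)) z :=
      h0.cexp
    have := h.const_mul (f t : ℂ)
    refine this.congr_deriv ?_
    ring

/-- The Laplacian of `f : ℝ^k → ℝ` at `x`: the sum of second partial derivatives
in the standard orthonormal coordinate directions. -/
noncomputable def laplacian {k : ℕ} (f : EuclideanSpace ℝ (Fin k) → ℝ)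
    (x : EuclideanSpace ℝ (Fin k)) : ℝ :=
  ∑ i : Fin k,
    fderiv ℝ (fun y => fderiv ℝ f y (EuclideanSpace.single i 1)) x (EuclideanSpace.single i 1)

private noncomputable def phi (f : ℝ → ℝ) (u : ℝ) : ℝ := Real.sqrt (Gaux f 0 u)

private noncomputable def phi1 (f : ℝ → ℝ) (u : ℝ) : ℝ :=
  Gaux f 1 u / (2 * Real.sqrt (Gaux f 0 u))

private noncomputable def phi2 (f : ℝ → ℝ) (u : ℝ) : ℝ :=
  (Gaux f 2 u * (2 * Real.sqrt (Gaux f 0 u)) -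
      Gaux f 1 u * (2 * (1 / (2 * Real.sqrt (Gaux f 0 u)) * Gaux f 1 u))) /
    (2 * Real.sqrt (Gaux f 0 u))^2

private lemma phi_hasDerivAt (f : ℝ → ℝ) (hfmeas : Measurable f)
    (hfint : IntegrableOn f (Set.Ioo (0 : ℝ) 1))
    (hpos : ∀ u : ℝ, 0 < Gaux f 0 u) (u : ℝ) :
    HasDerivAt (phi f) (phi1 f u) u := by
  have h := (Real.hasDerivAt_sqrt (hpos u).ne').comp u (Gaux_hasDerivAt f hfmeas hfint 0 u)
  exact h.congr_deriv (by rw [phi1]; ring)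

private lemma phi1_hasDerivAt (f : ℝ → ℝ) (hfmeas : Measurable f)
    (hfint : IntegrableOn f (Set.Ioo (0 : ℝ) 1))
    (hpos : ∀ u : ℝ, 0 < Gaux f 0 u) (u : ℝ) :
    HasDerivAt (phi1 f) (phi2 f u) u := by
  have hden : HasDerivAt (fun u => 2 * Real.sqrt (Gaux f 0 u))
      (2 * (1 / (2 * Real.sqrt (Gaux f 0 u)) * Gaux f 1 u)) u :=
    ((Real.hasDerivAt_sqrt (hpos u).ne').comp u
      (Gaux_hasDerivAt f hfmeas hfint 0 u)).const_mul 2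
  have hnum : HasDerivAt (Gaux f 1) (Gaux f 2 u) u := Gaux_hasDerivAt f hfmeas hfint 1 u
  have hden_ne : 2 * Real.sqrt (Gaux f 0 u) ≠ 0 := by
    have := Real.sqrt_pos.mpr (hpos u)
    positivity
  exact hnum.div hden hden_ne

private lemma laplacian_phi_eq {k : ℕ} (f : ℝ → ℝ) (hfmeas : Measurable f)
    (hfint : IntegrableOn f (Set.Ioo (0 : ℝ) 1))
    (hpos : ∀ u : ℝ, 0 < Gaux f 0 u) (x : EuclideanSpace ℝ (Fin k)) :
    laplacian (fun y => phi f (‖y‖^2/2)) x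
      = phi2 f (‖x‖^2/2) * ‖x‖^2 + k * phi1 f (‖x‖^2/2) := by
  have hS : ∀ y : EuclideanSpace ℝ (Fin k),
      HasFDerivAt (fun y : EuclideanSpace ℝ (Fin k) => ‖y‖^2/2) (innerSL ℝ y) y := by
    intro y
    have h := ((hasStrictFDerivAt_norm_sq y).hasFDerivAt).const_mul (2:ℝ)⁻¹
    have he : ((2:ℝ)⁻¹ • ((2:ℕ) • (innerSL ℝ y))) = innerSL ℝ y := by
      ext v
      simp [two_smul]
      ring
    rw [he] at h
    simp only [div_eq_inv_mul]
    exact h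
  have hψ : ∀ y : EuclideanSpace ℝ (Fin k),
      HasFDerivAt (fun y : EuclideanSpace ℝ (Fin k) => phi f (‖y‖^2/2))
        (phi1 f (‖y‖^2/2) • (innerSL ℝ y)) y := fun y =>
    HasDerivAt.comp_hasFDerivAt (h₂ := phi f) y (phi_hasDerivAt f hfmeas hfint hpos (‖y‖^2/2)) (hS y)
  have hfd1 : ∀ (i : Fin k),
      (fun y : EuclideanSpace ℝ (Fin k) =>
          fderiv ℝ (fun y => phi f (‖y‖^2/2)) y (EuclideanSpace.single i 1))
        = fun y => phi1 f (‖y‖^2/2) * y i := by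
    intro i
    funext y
    rw [(hψ y).fderiv]
    simp [EuclideanSpace.inner_single_right, real_inner_comm]
  have hterm : ∀ i : Fin k,
      fderiv ℝ (fun y : EuclideanSpace ℝ (Fin k) =>
          fderiv ℝ (fun y => phi f (‖y‖^2/2)) y (EuclideanSpace.single i 1)) x
        (EuclideanSpace.single i 1)
      = phi2 f (‖x‖^2/2) * (x i)^2 + phi1 f (‖x‖^2/2) := by
    intro i
    rw [hfd1 i]
    have hc : HasFDerivAt (fun y : EuclideanSpace ℝ (Fin k) => phi1 f (‖y‖^2/2))
        (phi2 f (‖x‖^2/2) • (innerSL ℝ x)) x :=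
      HasDerivAt.comp_hasFDerivAt (h₂ := phi1 f) x (phi1_hasDerivAt f hfmeas hfint hpos (‖x‖^2/2)) (hS x)
    have hd : HasFDerivAt (fun y : EuclideanSpace ℝ (Fin k) => y i)
        (EuclideanSpace.proj i : EuclideanSpace ℝ (Fin k) →L[ℝ] ℝ) x := by
      have h := (EuclideanSpace.proj (𝕜 := ℝ) i).hasFDerivAt (x := x)
      exact h
    have hA : HasFDerivAt (fun y : EuclideanSpace ℝ (Fin k) => phi1 f (‖y‖^2/2) * y i)
        (phi1 f (‖x‖^2/2) • EuclideanSpace.proj i + x i • phi2 f (‖x‖^2/2) • innerSL ℝ x) x :=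
      hc.mul hd
    rw [hA.fderiv]
    simp [EuclideanSpace.inner_single_right, EuclideanSpace.single_apply, real_inner_comm]
    ring
  rw [laplacian]
  rw [Finset.sum_congr rfl fun i _ => hterm i]
  rw [Finset.sum_add_distrib, ← Finset.mul_sum, Finset.sum_const]
  have hnorm : ∑ i : Fin k, (x i)^2 = ‖x‖^2 := by
    rw [← real_inner_self_eq_norm_sq, PiLp.inner_apply]
    congr 1
    funext i
    simp [pow_two]
  rw [hnorm]
  simp [nsmul_eq_mul]
  try ring

theorem stmt10 (k : ℕ) (hk : 0 < k) (f : ℝ → ℝ)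
    (hfmeas : Measurable f)
    (hfnn : ∀ t ∈ Set.Ioo (0 : ℝ) 1, 0 ≤ f t)
    (hfint : IntegrableOn f (Set.Ioo (0 : ℝ) 1))
    (hfpos : 0 < ∫ t in Set.Ioo (0 : ℝ) 1, f t)
    (G : ℝ → ℝ)
    (hG : ∀ s : ℝ, G s = ∫ t in Set.Ioo (0 : ℝ) 1, f t * Real.exp (-s * t))
    (m : EuclideanSpace ℝ (Fin k) → ℝ)
    (hm : ∀ x, m x = G (‖x‖ ^ 2 / 2)) :
    ContDiffOn ℝ (⊤ : ℕ∞) G (Set.Ioi (0 : ℝ)) ∧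
    (∀ s > (0 : ℝ), 0 < G s ∧ deriv G s < 0) ∧
    ((∀ s > (0 : ℝ),
        deriv G s / G s - 2 * deriv (deriv G) s / deriv G s ≤ k / s) →
      ∀ x : EuclideanSpace ℝ (Fin k), x ≠ 0 →
        laplacian (fun y => Real.sqrt (m y)) x ≤ 0) := by
  have hG0 : G = Gaux f 0 := by
    funext s
    rw [hG, Gaux]
    congr 1
    funext t
    rw [pow_zero, mul_one]
  subst hG0
  -- derivative identities
  have hderiv1 : deriv (Gaux f 0) = Gaux f 1 :=
    funext fun s => (Gaux_hasDerivAt f hfmeas hfint 0 s).deriv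
  have hderiv2 : deriv (deriv (Gaux f 0)) = Gaux f 2 := by
    rw [hderiv1]
    exact funext fun s => (Gaux_hasDerivAt f hfmeas hfint 1 s).deriv
  -- positivity of G
  have hGpos : ∀ s : ℝ, 0 < Gaux f 0 s := by
    intro s
    have hint0 : IntegrableOn (fun t => f t * Real.exp (-s*t)) (Set.Ioo (0:ℝ) 1) := by
      have := Gaux_int f hfmeas hfint 0 s
      simpa using this
    have h1 : ∫ t in Set.Ioo (0:ℝ) 1, f t * Real.exp (-|s|)
        ≤ ∫ t in Set.Ioo (0:ℝ) 1, f t * Real.exp (-s*t) := by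
      apply setIntegral_mono_on (hfint.mul_const _) hint0 measurableSet_Ioo
      intro t ht
      apply mul_le_mul_of_nonneg_left _ (hfnn t ht)
      apply Real.exp_le_exp.mpr
      have : s * t ≤ |s| := by
        calc s * t ≤ |s * t| := le_abs_self _
          _ = |s| * |t| := abs_mul _ _
          _ ≤ |s| * 1 := by
              apply mul_le_mul_of_nonneg_left _ (abs_nonneg s)
              rw [abs_of_pos ht.1]; exact ht.2.le
          _ = |s| := mul_one _
      linarith
    have h2 : (0:ℝ) < ∫ t in Set.Ioo (0:ℝ) 1, f t * Real.exp (-|s|) := by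
      rw [integral_mul_const]
      exact mul_pos hfpos (Real.exp_pos _)
    have : Gaux f 0 s = ∫ t in Set.Ioo (0:ℝ) 1, f t * Real.exp (-s*t) := by
      rw [Gaux]; congr 1; funext t; rw [pow_zero, mul_one]
    rw [this]
    linarith
  -- negativity of G'
  obtain ⟨ε, hε0, hε1, hIf⟩ : ∃ ε : ℝ, 0 < ε ∧ ε < 1 ∧ 0 < ∫ t in Set.Ioo ε 1, f t := by
    have hmono : Monotone (fun n : ℕ => Set.Ioo ((1:ℝ)/(n+2)) 1) := by
      intro a b hab
      apply Set.Ioo_subset_Ioo _ le_rfl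
      apply one_div_le_one_div_of_le (by positivity)
      have : (a:ℝ) ≤ b := Nat.cast_le.mpr hab
      linarith
    have hunion : (⋃ n : ℕ, Set.Ioo ((1:ℝ)/(n+2)) 1) = Set.Ioo 0 1 := by
      ext t
      simp only [Set.mem_iUnion, Set.mem_Ioo]
      constructor
      · rintro ⟨n, h1, h2⟩
        have : (0:ℝ) < 1/(n+2) := by positivity
        exact ⟨lt_trans this h1, h2⟩
      · rintro ⟨h1, h2⟩
        obtain ⟨n, hn⟩ := exists_nat_gt (1/t)
        refine ⟨n, ?_, h2⟩
        rw [div_lt_iff₀ (by positivity)]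
        have h3 : 1/t < n + 2 := by linarith
        calc (1:ℝ) = t * (1/t) := by field_simp
          _ < t * (n+2) := by apply mul_lt_mul_of_pos_left h3 h1
    have htend := tendsto_setIntegral_of_monotone (μ := volume) (f := f)
      (fun n : ℕ => measurableSet_Ioo) hmono (by rw [hunion]; exact hfint)
    rw [hunion] at htend
    have hev := htend.eventually (eventually_gt_nhds hfpos)
    obtain ⟨n, hn⟩ := hev.exists
    refine ⟨1/(n+2), by positivity, ?_, hn⟩
    rw [div_lt_one (by positivity)]
    have : (0:ℝ) ≤ n := Nat.cast_nonneg n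
    linarith
  have hG1neg : ∀ s : ℝ, Gaux f 1 s < 0 := by
    intro s
    have hint01 : IntegrableOn (fun t => f t * t * Real.exp (-s*t)) (Set.Ioo (0:ℝ) 1) := by
      have h := (Gaux_int f hfmeas hfint 1 s).neg
      apply h.congr (Filter.Eventually.of_forall fun t => by simp only [Pi.neg_apply]; ring)
    have hkey : 0 < ∫ t in Set.Ioo (0:ℝ) 1, f t * t * Real.exp (-s*t) := by
      have hintε : IntegrableOn f (Set.Ioo ε 1) :=
        hfint.mono_set (Set.Ioo_subset_Ioo hε0.le le_rfl)
      calc (0:ℝ) < (∫ t in Set.Ioo ε 1, f t) * (ε * Real.exp (-|s|)) := by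
            apply mul_pos hIf
            positivity
        _ = ∫ t in Set.Ioo ε 1, f t * (ε * Real.exp (-|s|)) := (integral_mul_const _ _).symm
        _ ≤ ∫ t in Set.Ioo ε 1, f t * t * Real.exp (-s*t) := by
            apply setIntegral_mono_on (hintε.mul_const _)
              (hint01.mono_set (Set.Ioo_subset_Ioo hε0.le le_rfl)) measurableSet_Ioo
            intro t ht
            have h0t : 0 < t := lt_trans hε0 ht.1
            have hf0 : 0 ≤ f t := hfnn t ⟨h0t, ht.2⟩
            have hexp : Real.exp (-|s|) ≤ Real.exp (-s*t) := by
              apply Real.exp_le_exp.mpr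
              have : s * t ≤ |s| := by
                calc s * t ≤ |s * t| := le_abs_self _
                  _ = |s| * |t| := abs_mul _ _
                  _ ≤ |s| * 1 := by
                      apply mul_le_mul_of_nonneg_left _ (abs_nonneg s)
                      rw [abs_of_pos h0t]; exact ht.2.le
                  _ = |s| := mul_one _
              linarith
            calc f t * (ε * Real.exp (-|s|)) ≤ f t * (t * Real.exp (-s*t)) := by
                  apply mul_le_mul_of_nonneg_left _ hf0
                  exact mul_le_mul ht.1.le hexp (Real.exp_pos _).le h0t.le
              _ = f t * t * Real.exp (-s*t) := by ring
        _ ≤ ∫ t in Set.Ioo (0:ℝ) 1, f t * t * Real.exp (-s*t) := by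
            apply setIntegral_mono_set hint01 ?_
              (HasSubset.Subset.eventuallyLE (Set.Ioo_subset_Ioo hε0.le le_rfl))
            filter_upwards [ae_restrict_mem measurableSet_Ioo] with t ht
            have h1 := hfnn t ht
            have h2 := ht.1
            show (0:ℝ) ≤ f t * t * Real.exp (-s*t)
            positivity
    have heq : Gaux f 1 s = - ∫ t in Set.Ioo (0:ℝ) 1, f t * t * Real.exp (-s*t) := by
      rw [Gaux, ← integral_neg]
      congr 1
      funext t
      rw [pow_one]
      ring
    rw [heq]
    linarith
  refine ⟨?_, ?_, ?_⟩
  · -- smoothness via complex analyticity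
    have hana : AnalyticOnNhd ℝ (Gaux f 0) Set.univ := by
      have hC : AnalyticOnNhd ℂ
          (fun z : ℂ => ∫ t in Set.Ioo (0:ℝ) 1, (f t : ℂ) * Complex.exp (-z*t)) Set.univ :=
        Complex.analyticOnNhd_univ_iff_differentiable.mpr (Gc_diff f hfmeas hfint)
      have hR := hC.restrictScalars (𝕜 := ℝ)
      have hcomp : AnalyticOnNhd ℝ (fun s : ℝ => Complex.reCLM
          ((fun z : ℂ => ∫ t in Set.Ioo (0:ℝ) 1, (f t : ℂ) * Complex.exp (-z*t))
            (Complex.ofRealCLM s))) Set.univ := by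
      -- reCLM ∘ Gc ∘ ofRealCLM
        apply ((Complex.reCLM.analyticOnNhd Set.univ).comp
          (hR.comp (Complex.ofRealCLM.analyticOnNhd Set.univ) (Set.mapsTo_univ _ _))
          (Set.mapsTo_univ _ _))
      have hfun : (fun s : ℝ => Complex.reCLM
          ((fun z : ℂ => ∫ t in Set.Ioo (0:ℝ) 1, (f t : ℂ) * Complex.exp (-z*t))
            (Complex.ofRealCLM s))) = Gaux f 0 := by
        funext s
        have hre : (∫ t in Set.Ioo (0:ℝ) 1, (f t : ℂ) * Complex.exp (-(s:ℂ)*t))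
            = ((∫ t in Set.Ioo (0:ℝ) 1, f t * (-t)^0 * Real.exp (-s*t) : ℝ) : ℂ) := by
          rw [show ((∫ t in Set.Ioo (0:ℝ) 1, f t * (-t)^0 * Real.exp (-s*t) : ℝ) : ℂ)
              = ∫ t in Set.Ioo (0:ℝ) 1, ((f t * (-t)^0 * Real.exp (-s*t) : ℝ) : ℂ)
            from (integral_ofReal (𝕜 := ℂ)).symm]
          congr 1
          funext t
          push_cast
          ring
        simp only [Complex.ofRealCLM_apply]
        rw [hre]
        simp [Gaux]
      rw [hfun] at hcomp
      exact hcomp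
    exact (hana.contDiff).contDiffOn
  · intro s hs
    refine ⟨hGpos s, ?_⟩
    rw [hderiv1]
    exact hG1neg s
  · intro hyp x hx
    have hmfun : (fun y : EuclideanSpace ℝ (Fin k) => Real.sqrt (m y))
        = fun y => phi f (‖y‖^2/2) := by
      funext y
      rw [hm, phi]
    rw [hmfun, laplacian_phi_eq f hfmeas hfint hGpos x]
    set s : ℝ := ‖x‖^2/2 with hsdef
    have hxnorm : 0 < ‖x‖ := norm_pos_iff.mpr hx
    have hs : 0 < s := by rw [hsdef]; positivity
    have hx2 : ‖x‖^2 = 2 * s := by rw [hsdef]; ring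
    have h := hyp s hs
    rw [hderiv2, hderiv1] at h
    set a : ℝ := Gaux f 0 s with hadef
    set b : ℝ := Gaux f 1 s with hbdef
    set c : ℝ := Gaux f 2 s with hcdef
    have ha : 0 < a := hGpos s
    have hb : b < 0 := hG1neg s
    set r : ℝ := Real.sqrt a with hrdef
    have hr : 0 < r := Real.sqrt_pos.mpr ha
    have hr2 : r^2 = a := Real.sq_sqrt ha.le
    -- key algebraic inequality
    have hsb : s * b < 0 := mul_neg_of_pos_of_neg hs hb
    have h2 := mul_le_mul_of_nonpos_right h hsb.le
    have e1 : ((k:ℝ)/s)*(s*b) = k*b := by field_simp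
    have e2 : (b/a - 2*c/b)*(s*b) = s*b*b/a - 2*s*c := by field_simp [ha.ne', hb.ne, hs.ne']
    rw [e1, e2] at h2
    have key : 2*s*c - s*b*b/a + k*b ≤ 0 := by linarith
    have hgoal : phi2 f s * ‖x‖^2 + k * phi1 f s
        = (2*s*c - s*b*b/a + k*b)/(2*r) := by
      rw [hx2, phi2, phi1, ← hadef, ← hbdef, ← hcdef, ← hrdef, ← hr2]
      have hrne : r ≠ 0 := hr.ne'
      field_simp
    rw [hgoal]
    apply div_nonpos_of_nonpos_of_nonneg key
    positivity
end

section
/- Let m be a nonnegative integer and s > 0. Then ( Σ_{j=m+1}^∞ s^j/(j+1)! ) / ( Σ_{j=m+1}^∞ s^j/j! ) ≤ ( Σ_{j=m}^∞ s^j/(j+1)! ) / ( Σ_{j=m}^∞ s^j/j! ). (All series converge and all denominators are positive.) -/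
open Real Nat

private lemma f_summable (s : ℝ) (k : ℕ) :
    Summable (fun j : ℕ => s ^ (k + j) / (((k + j)!) : ℝ)) := by
  have h := Real.summable_pow_div_factorial s
  have h2 := (summable_nat_add_iff k).mpr h
  refine h2.congr fun j => ?_
  simp [Nat.add_comm]

private lemma g_summable (s : ℝ) (hs : 0 < s) (k : ℕ) :
    Summable (fun j : ℕ => s ^ (k + j) / (((k + j + 1)!) : ℝ)) := by
  refine Summable.of_nonneg_of_le (fun j => by positivity) (fun j => ?_) (f_summable s k)
  apply div_le_div_of_nonneg_left (by positivity) (by positivity)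
  exact_mod_cast Nat.factorial_le (Nat.le_succ _)

private lemma shift_tsum (s : ℝ) (F : ℕ → ℝ) (hF : Summable fun j : ℕ => F (m + j)) :
    ∑' j : ℕ, F (m + j) = F m + ∑' j : ℕ, F (m + 1 + j) := by
  rw [Summable.tsum_eq_zero_add hF, Nat.add_zero]
  congr 1
  exact tsum_congr fun j => by rw [show m + (j + 1) = m + 1 + j by omega]

theorem stmt13 (m : ℕ) (s : ℝ) (hs : 0 < s) :
    Summable (fun j : ℕ => s ^ (m + 1 + j) / (((m + 1 + j)!) : ℝ)) ∧
    Summable (fun j : ℕ => s ^ (m + 1 + j) / (((m + 1 + j + 1)!) : ℝ)) ∧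
    Summable (fun j : ℕ => s ^ (m + j) / (((m + j)!) : ℝ)) ∧
    Summable (fun j : ℕ => s ^ (m + j) / (((m + j + 1)!) : ℝ)) ∧
    0 < ∑' j : ℕ, s ^ (m + 1 + j) / (((m + 1 + j)!) : ℝ) ∧
    0 < ∑' j : ℕ, s ^ (m + j) / (((m + j)!) : ℝ) ∧
    (∑' j : ℕ, s ^ (m + 1 + j) / (((m + 1 + j + 1)!) : ℝ)) /
        (∑' j : ℕ, s ^ (m + 1 + j) / (((m + 1 + j)!) : ℝ))
      ≤ (∑' j : ℕ, s ^ (m + j) / (((m + j + 1)!) : ℝ)) /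
          (∑' j : ℕ, s ^ (m + j) / (((m + j)!) : ℝ)) := by
  have hf1 := f_summable s (m + 1)
  have hg1 := g_summable s hs (m + 1)
  have hf0 := f_summable s m
  have hg0 := g_summable s hs m
  have hB1 : 0 < ∑' j : ℕ, s ^ (m + 1 + j) / (((m + 1 + j)!) : ℝ) :=
    Summable.tsum_pos hf1 (fun j => by positivity) 0 (by positivity)
  have hB0 : 0 < ∑' j : ℕ, s ^ (m + j) / (((m + j)!) : ℝ) :=
    Summable.tsum_pos hf0 (fun j => by positivity) 0 (by positivity)
  refine ⟨hf1, hg1, hf0, hg0, hB1, hB0, ?_⟩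
  rw [div_le_div_iff₀ hB1 hB0]
  have hfsplit : (∑' j : ℕ, s ^ (m + j) / (((m + j)!) : ℝ))
      = s ^ m / (m ! : ℝ) + ∑' j : ℕ, s ^ (m + 1 + j) / (((m + 1 + j)!) : ℝ) :=
    shift_tsum s (fun k => s ^ k / (k ! : ℝ)) hf0
  have hgsplit : (∑' j : ℕ, s ^ (m + j) / (((m + j + 1)!) : ℝ))
      = s ^ m / (((m + 1)!) : ℝ) + ∑' j : ℕ, s ^ (m + 1 + j) / (((m + 1 + j + 1)!) : ℝ) :=
    shift_tsum s (fun k => s ^ k / (((k + 1)!) : ℝ)) hg0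
  rw [hfsplit, hgsplit]
  set A1 := ∑' j : ℕ, s ^ (m + 1 + j) / (((m + 1 + j + 1)!) : ℝ)
  set B1 := ∑' j : ℕ, s ^ (m + 1 + j) / (((m + 1 + j)!) : ℝ)
  have key : A1 * (s ^ m / (m ! : ℝ)) ≤ (s ^ m / (((m + 1)!) : ℝ)) * B1 := by
    rw [← tsum_mul_right, ← tsum_mul_left]
    refine Summable.tsum_le_tsum (fun j => ?_) (hg1.mul_right _) (hf1.mul_left _)
    rw [_root_.div_mul_div_comm, _root_.div_mul_div_comm]
    rw [mul_comm (s ^ m) (s ^ (m + 1 + j))]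
    apply div_le_div_of_nonneg_left (by positivity) (by positivity)
    have : ((m + 1)! : ℕ) * ((m + 1 + j)!) ≤ ((m + 1 + j + 1)!) * m ! := by
      rw [Nat.factorial_succ (m + 1 + j), Nat.factorial_succ m]
      calc (m + 1) * m ! * (m + 1 + j)!
          ≤ (m + 1 + j + 1) * m ! * (m + 1 + j)! := by
            apply Nat.mul_le_mul_right
            exact Nat.mul_le_mul_right _ (by omega)
        _ = (m + 1 + j + 1) * (m + 1 + j)! * m ! := by ring
    exact_mod_cast this
  nlinarith [hB1, key]
end

section
/- Let k and n be integers with n ≥ 0 and n ≤ k − 3. Then for every s > 0: 2(n+2) · s · ( Σ_{j=n+2}^∞ s^j/(j+1)! ) / ( Σ_{j=n+2}^∞ s^j/j! ) − (n+1) · s · ( Σ_{j=n+1}^∞ s^j/(j+1)! ) / ( Σ_{j=n+1}^∞ s^j/j! ) ≤ k. -/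
open Real Nat

private noncomputable def Gfun (s : ℝ) (m : ℕ) : ℝ :=
  ∑' j : ℕ, s ^ (m + j) / ((m + j)! : ℝ)

private lemma G_summable (s : ℝ) (m : ℕ) :
    Summable (fun j : ℕ => s ^ (m + j) / ((m + j)! : ℝ)) :=
  (Real.summable_pow_div_factorial s).comp_injective (fun a b h => by omega)

private lemma G_pos {s : ℝ} (hs : 0 < s) (m : ℕ) : 0 < Gfun s m :=
  Summable.tsum_pos (G_summable s m) (fun j => by positivity) 0 (by positivity)

private lemma G_split (s : ℝ) (m : ℕ) :
    Gfun s m = s ^ m / (m ! : ℝ) + Gfun s (m + 1) := by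
  rw [Gfun, Summable.tsum_eq_zero_add (G_summable s m)]
  congr 1
  apply tsum_congr
  intro j
  rw [show m + (j + 1) = m + 1 + j by omega]

private lemma G_succ_le {s : ℝ} (hs : 0 < s) (m : ℕ) :
    Gfun s (m + 1) ≤ Gfun s m := by
  rw [G_split s m]
  have h : (0 : ℝ) ≤ s ^ m / (m ! : ℝ) := by positivity
  linarith

private lemma G_cross {s : ℝ} (hs : 0 < s) (m : ℕ) :
    Gfun s (m + 2) * Gfun s m ≤ Gfun s (m + 1) * Gfun s (m + 1) := by
  have key : s ^ m / (m ! : ℝ) * Gfun s (m + 2)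
      ≤ s ^ (m + 1) / (((m + 1)!) : ℝ) * Gfun s (m + 1) := by
    rw [Gfun, Gfun, ← tsum_mul_left, ← tsum_mul_left]
    apply Summable.tsum_le_tsum _ ((G_summable s (m + 2)).mul_left _)
      ((G_summable s (m + 1)).mul_left _)
    intro j
    have e1 : s ^ m / (m ! : ℝ) * (s ^ (m + 2 + j) / ((m + 2 + j)! : ℝ))
        = s ^ (m + (m + 2 + j)) / ((m ! : ℝ) * ((m + 2 + j)! : ℝ)) := by
      rw [pow_add]; ring
    have e2 : s ^ (m + 1) / (((m + 1)!) : ℝ) * (s ^ (m + 1 + j) / ((m + 1 + j)! : ℝ))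
        = s ^ (m + 1 + (m + 1 + j)) / ((((m + 1)!) : ℝ) * ((m + 1 + j)! : ℝ)) := by
      rw [pow_add]; ring
    rw [e1, e2, show m + (m + 2 + j) = m + 1 + (m + 1 + j) by omega]
    apply div_le_div_of_nonneg_left (by positivity) (by positivity)
    have h : ((m + 1)! * (m + 1 + j)! : ℕ) ≤ m ! * (m + 2 + j)! := by
        rw [Nat.factorial_succ, show m + 2 + j = (m + 1 + j) + 1 by omega,
          Nat.factorial_succ]
        have : m + 1 ≤ m + 1 + j + 1 := by omega
        calc (m + 1) * m ! * (m + 1 + j)!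
            ≤ (m + 1 + j + 1) * m ! * (m + 1 + j)! := by
              exact Nat.mul_le_mul_right _ (Nat.mul_le_mul_right _ this)
          _ = m ! * ((m + 1 + j + 1) * (m + 1 + j)!) := by ring
    calc ((m + 1)! : ℝ) * ((m + 1 + j)! : ℝ) = (((m + 1)! * (m + 1 + j)! : ℕ) : ℝ) := by
          push_cast; ring
      _ ≤ ((m ! * (m + 2 + j)! : ℕ) : ℝ) := by exact_mod_cast h
      _ = (m ! : ℝ) * ((m + 2 + j)! : ℝ) := by push_cast; ring
  nlinarith [G_split s m, G_split s (m + 1), G_pos hs (m + 1), G_pos hs (m + 2)]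

private lemma sN_eq (s : ℝ) (m : ℕ) :
    s * (∑' j : ℕ, s ^ (m + j) / (((m + j + 1)!) : ℝ)) = Gfun s (m + 1) := by
  rw [← tsum_mul_left, Gfun]
  apply tsum_congr
  intro j
  rw [show m + 1 + j = m + j + 1 by omega, pow_succ]
  ring

theorem stmt14 (k n : ℕ) (hn : n + 3 ≤ k) :
    ∀ s > (0 : ℝ),
      2 * (n + 2) * s *
          ((∑' j : ℕ, s ^ (n + 2 + j) / (((n + 2 + j + 1)!) : ℝ)) /
            (∑' j : ℕ, s ^ (n + 2 + j) / (((n + 2 + j)!) : ℝ)))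
        - (n + 1) * s *
            ((∑' j : ℕ, s ^ (n + 1 + j) / (((n + 1 + j + 1)!) : ℝ)) /
              (∑' j : ℕ, s ^ (n + 1 + j) / (((n + 1 + j)!) : ℝ)))
        ≤ k := by
  intro s hs
  have h2 : s * ((∑' j : ℕ, s ^ (n + 2 + j) / (((n + 2 + j + 1)!) : ℝ)) /
      (∑' j : ℕ, s ^ (n + 2 + j) / (((n + 2 + j)!) : ℝ)))
      = Gfun s (n + 3) / Gfun s (n + 2) := by
    rw [← mul_div_assoc, sN_eq s (n + 2)]
    rfl
  have h1 : s * ((∑' j : ℕ, s ^ (n + 1 + j) / (((n + 1 + j + 1)!) : ℝ)) /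
      (∑' j : ℕ, s ^ (n + 1 + j) / (((n + 1 + j)!) : ℝ)))
      = Gfun s (n + 2) / Gfun s (n + 1) := by
    rw [← mul_div_assoc, sN_eq s (n + 1)]
    rfl
  rw [mul_assoc (2 * (n + 2) : ℝ) s, h2, mul_assoc ((n : ℝ) + 1) s, h1]
  set x := Gfun s (n + 3) / Gfun s (n + 2) with hxdef
  set y := Gfun s (n + 2) / Gfun s (n + 1) with hydef
  have hp1 := G_pos hs (n + 1)
  have hp2 := G_pos hs (n + 2)
  have hp3 := G_pos hs (n + 3)
  have hx0 : 0 ≤ x := le_of_lt (div_pos hp3 hp2)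
  have hxy : x ≤ y := by
    rw [hxdef, hydef, div_le_div_iff₀ hp2 hp1]
    exact G_cross hs (n + 1)
  have hy1 : y ≤ 1 := by
    rw [hydef, div_le_one hp1]
    exact G_succ_le hs (n + 1)
  have hk : (n : ℝ) + 3 ≤ (k : ℝ) := by exact_mod_cast hn
  nlinarith [mul_le_mul_of_nonneg_left hxy (show (0 : ℝ) ≤ (n : ℝ) + 1 by positivity),
    mul_le_mul (le_refl ((n : ℝ) + 3)) (hxy.trans hy1) hx0 (by positivity)]
end

section
/- (Example 1 conclusion.) Let k and n be integers with 0 ≤ n ≤ k − 3, and define G(s) = ∫₀^1 t^n e^{−st} dt for s > 0. Then G(s) > 0 and G′(s) < 0 for all s > 0, and G′(s)/G(s) − 2·G″(s)/G′(s) ≤ k/s for all s > 0. -/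
/-!
Write `I m s = ∫₀¹ t^m e^{-st} dt`, so that `G = I n`. Differentiating under the integral sign
gives `I m' = -I (m+1)`, and integration by parts gives `s I (m+1) = (m+1) I m - e^{-s}`. Hence
`s (G'/G - 2G''/G') = s (2 I (n+2) / I (n+1) - I (n+1) / I n)
  = n + 3 - 2 e^{-s} / I (n+1) + e^{-s} / I n`,
which is at most `n + 3 ≤ k` because `0 < I (n+1) ≤ I n`.
-/

open Real MeasureTheory ProbabilityTheory

noncomputable def laplaceMonomial (m : ℕ) (s : ℝ) : ℝ :=
  ∫ t in (0 : ℝ)..1, t ^ m * exp (-s * t)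

lemma continuous_pow_mul_exp (m : ℕ) (s : ℝ) : Continuous fun t : ℝ ↦ t ^ m * exp (-s * t) := by
  fun_prop

lemma laplaceMonomial_eq_integral_Ioc (m : ℕ) :
    laplaceMonomial m = fun s ↦ ∫ t in Set.Ioc (0 : ℝ) 1, t ^ m * exp (-s * t) := by
  ext s
  exact intervalIntegral.integral_of_le zero_le_one

lemma integrableExpSet_id_restrict_Ioc (a b : ℝ) :
    integrableExpSet id (volume.restrict (Set.Ioc a b)) = Set.univ :=
  Set.eq_univ_of_forall fun _ ↦
    (continuous_const.mul continuous_id).rexp.integrableOn_Icc.mono_set Set.Ioc_subset_Icc_self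

-- With `u = -s`, `laplaceMonomial m` is a moment `∫ t^m e^{ut}` of the identity under Lebesgue
-- measure on `(0, 1]`, which Mathlib differentiates in `u` like a moment generating function.
lemma hasDerivAt_laplaceMonomial (m : ℕ) (s : ℝ) :
    HasDerivAt (laplaceMonomial m) (-laplaceMonomial (m + 1) s) s := by
  have h := hasDerivAt_integral_pow_mul_exp_real (X := id)
    (μ := volume.restrict (Set.Ioc (0 : ℝ) 1)) (t := -s)
    (by simp [integrableExpSet_id_restrict_Ioc]) m
  simp only [laplaceMonomial_eq_integral_Ioc]
  simpa [Function.comp_def] using h.comp s (hasDerivAt_neg s)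

lemma deriv_laplaceMonomial (m : ℕ) :
    deriv (laplaceMonomial m) = fun s ↦ -laplaceMonomial (m + 1) s :=
  funext fun s ↦ (hasDerivAt_laplaceMonomial m s).deriv

lemma laplaceMonomial_pos (m : ℕ) (s : ℝ) : 0 < laplaceMonomial m s :=
  intervalIntegral.intervalIntegral_pos_of_pos_on
    ((continuous_pow_mul_exp m s).intervalIntegrable 0 1)
    (fun _ ht ↦ mul_pos (pow_pos ht.1 m) (exp_pos _)) one_pos

lemma laplaceMonomial_succ_le (m : ℕ) (s : ℝ) : laplaceMonomial (m + 1) s ≤ laplaceMonomial m s :=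
  intervalIntegral.integral_mono_on zero_le_one
    ((continuous_pow_mul_exp _ s).intervalIntegrable 0 1)
    ((continuous_pow_mul_exp _ s).intervalIntegrable 0 1)
    fun _ ht ↦ mul_le_mul_of_nonneg_right
      (pow_le_pow_of_le_one ht.1 ht.2 m.le_succ) (exp_pos _).le

lemma mul_laplaceMonomial_succ (m : ℕ) (s : ℝ) :
    s * laplaceMonomial (m + 1) s = (m + 1) * laplaceMonomial m s - exp (-s) := by
  have hparts := intervalIntegral.integral_deriv_mul_eq_sub (a := 0) (b := 1)
    (u := fun t : ℝ ↦ t ^ (m + 1)) (u' := fun t ↦ (m + 1 : ℕ) * t ^ m)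
    (v := fun t ↦ exp (-s * t)) (v' := fun t ↦ exp (-s * t) * -s)
    (fun t _ ↦ hasDerivAt_pow (m + 1) t)
    (fun t _ ↦ ((hasDerivAt_id t).const_mul (-s)).exp.congr_deriv (by simp))
    ((by fun_prop : Continuous _).intervalIntegrable 0 1)
    ((by fun_prop : Continuous _).intervalIntegrable 0 1)
  have hint : ∀ j, IntervalIntegrable (fun t : ℝ ↦ t ^ j * exp (-s * t)) volume 0 1 :=
    fun j ↦ (continuous_pow_mul_exp j s).intervalIntegrable 0 1
  have hsplit : ∫ t in (0 : ℝ)..1, (m + 1 : ℕ) * t ^ m * exp (-s * t) +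
        t ^ (m + 1) * (exp (-s * t) * -s) =
      (m + 1) * laplaceMonomial m s - s * laplaceMonomial (m + 1) s := by
    simp only [mul_assoc, mul_comm (exp _) (-s), mul_left_comm _ (-s)]
    rw [intervalIntegral.integral_add ((hint m).const_mul _) ((hint (m + 1)).const_mul _),
      intervalIntegral.integral_const_mul, intervalIntegral.integral_const_mul]
    push_cast [laplaceMonomial]
    ring
  rw [hsplit] at hparts
  simp only [one_pow, one_mul, mul_one, zero_pow m.succ_ne_zero, zero_mul, sub_zero] at hparts
  linarith

lemma laplaceMonomial_ratio_le (m : ℕ) {s : ℝ} (hs : 0 < s) :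
    2 * laplaceMonomial (m + 2) s / laplaceMonomial (m + 1) s -
      laplaceMonomial (m + 1) s / laplaceMonomial m s ≤ (m + 3) / s := by
  have hA := laplaceMonomial_pos m s
  have hB := laplaceMonomial_pos (m + 1) s
  have hE := exp_pos (-s)
  have hsB := mul_laplaceMonomial_succ m s
  have hsC := mul_laplaceMonomial_succ (m + 1) s
  have hEA : exp (-s) / laplaceMonomial m s ≤ exp (-s) / laplaceMonomial (m + 1) s :=
    div_le_div_of_nonneg_left hE.le hB (laplaceMonomial_succ_le m s)
  rw [le_div_iff₀ hs]
  calc (2 * laplaceMonomial (m + 2) s / laplaceMonomial (m + 1) s -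
        laplaceMonomial (m + 1) s / laplaceMonomial m s) * s
      = m + 3 - 2 * (exp (-s) / laplaceMonomial (m + 1) s) + exp (-s) / laplaceMonomial m s := by
        field_simp
        push_cast at hsC
        linear_combination (2 * laplaceMonomial m s) * hsC - laplaceMonomial (m + 1) s * hsB
    _ ≤ m + 3 := by linarith [div_pos hE hB]

theorem stmt15 (k n : ℕ) (hn : n + 3 ≤ k) (G : ℝ → ℝ)
    (hG : ∀ s : ℝ, G s = ∫ t in (0 : ℝ)..1, t ^ n * Real.exp (-s * t)) :
    (∀ s > (0 : ℝ), 0 < G s ∧ deriv G s < 0) ∧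
    (∀ s > (0 : ℝ),
      deriv G s / G s - 2 * deriv (deriv G) s / deriv G s ≤ k / s) := by
  obtain rfl : G = laplaceMonomial n := funext hG
  have hderiv2 : deriv (deriv (laplaceMonomial n)) = laplaceMonomial (n + 2) := by
    rw [deriv_laplaceMonomial n]
    exact funext fun s ↦ (hasDerivAt_laplaceMonomial (n + 1) s).neg.deriv.trans (neg_neg _)
  refine ⟨fun s _ ↦ ⟨laplaceMonomial_pos n s, ?_⟩, fun s hs ↦ ?_⟩
  · simpa [deriv_laplaceMonomial] using laplaceMonomial_pos (n + 1) s
  · have hk : ((n + 3 : ℕ) : ℝ) ≤ k := by exact_mod_cast hn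
    calc deriv (laplaceMonomial n) s / laplaceMonomial n s -
          2 * deriv (deriv (laplaceMonomial n)) s / deriv (laplaceMonomial n) s
        = 2 * laplaceMonomial (n + 2) s / laplaceMonomial (n + 1) s -
          laplaceMonomial (n + 1) s / laplaceMonomial n s := by
          rw [hderiv2, deriv_laplaceMonomial]; ring
      _ ≤ (n + 3) / s := laplaceMonomial_ratio_le n hs
      _ ≤ k / s := by push_cast at hk; gcongr
end

section
/- (Example 2 integration by parts.) Let α > 0, β > 1, 0 < σ < 1, γ ∈ ℝ, and for s > 0 define f_s(t) = t^{α−1}(1−t)^{β−1}(1−σt)^{−γ} e^{−st} for t ∈ (0,1) and G(s) = ∫₀^1 f_s(t) dt. Then G is differentiable on (0,∞), and for every s > 0: −G′(s) = (1/s) · ∫₀^1 [ α − (β−1)·t/(1−t) + γσ·t/(1−σt) ] · f_s(t) dt, all integrals being absolutely convergent. -/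
open Real MeasureTheory

/-!
Write `K_{a,b,c}(s, t) = t^a (1-t)^b (1-σt)^c e^{-st}`, so that `f_s = K_{α-1,β-1,-γ}(s, ·)`.
Each `K_{a,b,c}(s, ·)` with `a, b > -1` is integrable on `(0,1)`: near `0` it is `t^a` times a
function continuous up to the boundary, near `1` it is `(1-t)^b` times one. Since
`∂ₛ K = -t K` and `|t K(x, t)| ≤ e^{|s|+1} K(0, t)` for `|x - s| < 1`, differentiation under the
integral sign gives `-G'(s) = ∫ t f_s`. Integration by parts is the fundamental theorem of
calculus for `H = t f_s = K_{α,β-1,-γ}(s, ·)`, which vanishes at both endpoints because `α > 0`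
and `β > 1`, and whose derivative is `(w - s t) f_s` with `w` the bracketed weight; hence
`∫ w f_s = s ∫ t f_s`.
-/

open Set Filter

noncomputable def gbKernel (σ a b c s t : ℝ) : ℝ :=
  t ^ a * (1 - t) ^ b * (1 - σ * t) ^ c * exp (-s * t)

noncomputable def gbKernelDeriv (σ a b c s t : ℝ) : ℝ :=
  a * gbKernel σ (a - 1) b c s t - b * gbKernel σ a (b - 1) c s t
    - c * σ * gbKernel σ a b (c - 1) s t - s * gbKernel σ a b c s t

section

variable {σ a b c s t : ℝ}

lemma one_sub_mul_pos_of_mem_Icc (hσ1 : σ < 1) (ht : t ∈ Icc (0 : ℝ) 1) : 0 < 1 - σ * t := by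
  obtain ⟨ht0, ht1⟩ := ht
  rcases le_or_gt σ 0 with h | h <;> nlinarith

lemma gbKernel_nonneg (hσ1 : σ < 1) (ht : t ∈ Icc (0 : ℝ) 1) : 0 ≤ gbKernel σ a b c s t := by
  have h0 : 0 ≤ t := ht.1
  have h1 : 0 ≤ 1 - t := sub_nonneg.2 ht.2
  have h2 := one_sub_mul_pos_of_mem_Icc hσ1 ht
  unfold gbKernel
  positivity

lemma gbKernel_eq_mul_exp : gbKernel σ a b c s t = gbKernel σ a b c 0 t * exp (-s * t) := by
  simp [gbKernel]

lemma mul_gbKernel (ht : t ≠ 0) : t * gbKernel σ a b c s t = gbKernel σ (a + 1) b c s t := by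
  simp only [gbKernel, rpow_add_one ht]
  ring

lemma continuousOn_gbKernel (ha : 0 ≤ a) (hb : 0 ≤ b) (hσ1 : σ < 1) :
    ContinuousOn (gbKernel σ a b c s) (Icc 0 1) := by
  intro t ht
  have := (one_sub_mul_pos_of_mem_Icc hσ1 ht).ne'
  exact ContinuousAt.continuousWithinAt (by
    unfold gbKernel
    fun_prop (disch := first | exact Or.inl ‹_› | exact Or.inr ‹_›))

lemma integrableOn_gbKernel (ha : -1 < a) (hb : -1 < b) (hσ1 : σ < 1) :
    IntegrableOn (gbKernel σ a b c s) (Ioo 0 1) := by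
  have hleft : IntegrableOn (gbKernel σ a b c s) (Ioc 0 (1 / 2)) := by
    have hpow : IntegrableOn (fun t : ℝ => t ^ a) (Ioc 0 (1 / 2)) :=
      (intervalIntegrable_iff_integrableOn_Ioc_of_le (by norm_num)).1
        (intervalIntegral.intervalIntegrable_rpow' ha)
    have hcont : ContinuousOn (fun t => (1 - t) ^ b * (1 - σ * t) ^ c * exp (-s * t))
        (Icc 0 (1 / 2)) := by
      intro t ht
      have h1 : 1 - t ≠ 0 := by linarith [ht.2]
      have h2 := (one_sub_mul_pos_of_mem_Icc hσ1 ⟨ht.1, by linarith [ht.2]⟩).ne'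
      exact ContinuousAt.continuousWithinAt (by
        fun_prop (disch := first | exact Or.inl ‹_›))
    convert hpow.mul_continuousOn_of_subset hcont measurableSet_Ioc isCompact_Icc
      Ioc_subset_Icc_self using 1
    funext t
    simp only [gbKernel]
    ring
  have hright : IntegrableOn (gbKernel σ a b c s) (Ioo (1 / 2) 1) := by
    have hpow : IntegrableOn (fun t : ℝ => (1 - t) ^ b) (Ioo (1 / 2) 1) := by
      have h := ((intervalIntegral.intervalIntegrable_rpow' (a := 0) (b := 1 / 2) hb).comp_sub_left
        1).symm
      norm_num at h
      exact (intervalIntegrable_iff_integrableOn_Ioo_of_le (by norm_num)).1 h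
    have hcont : ContinuousOn (fun t => t ^ a * (1 - σ * t) ^ c * exp (-s * t))
        (Icc (1 / 2) 1) := by
      intro t ht
      have h1 : t ≠ 0 := by linarith [ht.1]
      have h2 := (one_sub_mul_pos_of_mem_Icc hσ1 ⟨by linarith [ht.1], ht.2⟩).ne'
      exact ContinuousAt.continuousWithinAt (by
        fun_prop (disch := first | exact Or.inl ‹_›))
    convert hpow.mul_continuousOn_of_subset hcont measurableSet_Ioo isCompact_Icc
      Ioo_subset_Icc_self using 1
    funext t
    simp only [gbKernel]
    ring
  refine (hleft.union hright).mono_set fun t ht => ?_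
  rcases le_or_gt t (1 / 2) with h | h
  exacts [Or.inl ⟨ht.1, h⟩, Or.inr ⟨h, ht.2⟩]

lemma integrableOn_mul_gbKernel (ha : -2 < a) (hb : -1 < b) (hσ1 : σ < 1) :
    IntegrableOn (fun t => t * gbKernel σ a b c s t) (Ioo 0 1) :=
  (integrableOn_gbKernel (a := a + 1) (by linarith) hb hσ1).congr_fun
    (fun _ ht => (mul_gbKernel ht.1.ne').symm) measurableSet_Ioo

lemma hasDerivAt_gbKernel (hσ1 : σ < 1) (ht : t ∈ Ioo (0 : ℝ) 1) :
    HasDerivAt (gbKernel σ a b c s) (gbKernelDeriv σ a b c s t) t := by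
  have h0 : t ≠ 0 := ht.1.ne'
  have h1 : 1 - t ≠ 0 := by linarith [ht.2]
  have h2 := (one_sub_mul_pos_of_mem_Icc hσ1 (Ioo_subset_Icc_self ht)).ne'
  refine (((((hasDerivAt_id' t).rpow_const (p := a) (Or.inl h0)).mul
    (((hasDerivAt_id' t).const_sub 1).rpow_const (p := b) (Or.inl h1))).mul
    ((((hasDerivAt_id' t).const_mul σ).const_sub 1).rpow_const (p := c) (Or.inl h2))).mul
    ((hasDerivAt_id' t).const_mul (-s)).exp).congr_deriv ?_
  simp only [gbKernelDeriv, gbKernel, Pi.mul_apply]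
  ring

lemma integrableOn_gbKernelDeriv (ha : 0 < a) (hb : 0 < b) (hσ1 : σ < 1) :
    IntegrableOn (gbKernelDeriv σ a b c s) (Ioo 0 1) :=
  ((((integrableOn_gbKernel (by linarith) (by linarith) hσ1).const_mul a).sub
    ((integrableOn_gbKernel (by linarith) (by linarith) hσ1).const_mul b)).sub
    ((integrableOn_gbKernel (by linarith) (by linarith) hσ1).const_mul (c * σ))).sub
    ((integrableOn_gbKernel (by linarith) (by linarith) hσ1).const_mul s)

lemma integral_gbKernelDeriv (ha : 0 < a) (hb : 0 < b) (hσ1 : σ < 1) :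
    ∫ t in Ioo 0 1, gbKernelDeriv σ a b c s t = 0 := by
  have hftc := intervalIntegral.integral_eq_sub_of_hasDerivAt_of_le zero_le_one
    (continuousOn_gbKernel (c := c) (s := s) ha.le hb.le hσ1)
    (fun _ ht => hasDerivAt_gbKernel hσ1 ht)
    ((intervalIntegrable_iff_integrableOn_Ioo_of_le zero_le_one).2
      (integrableOn_gbKernelDeriv ha hb hσ1))
  rw [intervalIntegral.integral_of_le zero_le_one, integral_Ioc_eq_integral_Ioo] at hftc
  simpa [gbKernel, zero_rpow ha.ne', zero_rpow hb.ne'] using hftc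

lemma hasDerivAt_integral_gbKernel (ha : -1 < a) (hb : -1 < b) (hσ1 : σ < 1) (s : ℝ) :
    HasDerivAt (fun x => ∫ t in Ioo 0 1, gbKernel σ a b c x t)
      (-∫ t in Ioo 0 1, t * gbKernel σ a b c s t) s := by
  have hbound : ∀ᵐ t ∂volume.restrict (Ioo (0 : ℝ) 1), ∀ x ∈ Metric.ball s 1,
      ‖-(t * gbKernel σ a b c x t)‖ ≤ exp (|s| + 1) * gbKernel σ a b c 0 t := by
    filter_upwards [ae_restrict_mem measurableSet_Ioo] with t ht x hx
    have hx' : |x| < |s| + 1 := by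
      have := abs_sub_abs_le_abs_sub x s
      rw [Metric.mem_ball, Real.dist_eq] at hx
      linarith
    have hexp : exp (-x * t) ≤ exp (|s| + 1) := by
      gcongr
      nlinarith [neg_abs_le x, abs_nonneg x, ht.1, ht.2]
    have hK := gbKernel_nonneg (a := a) (b := b) (c := c) (s := 0) hσ1 (Ioo_subset_Icc_self ht)
    rw [norm_neg, gbKernel_eq_mul_exp, Real.norm_of_nonneg (by positivity [ht.1.le])]
    calc t * (gbKernel σ a b c 0 t * exp (-x * t))
        ≤ 1 * (gbKernel σ a b c 0 t * exp (|s| + 1)) := by gcongr; exact ht.2.le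
      _ = exp (|s| + 1) * gbKernel σ a b c 0 t := by ring
  have hderiv : ∀ᵐ t ∂volume.restrict (Ioo (0 : ℝ) 1), ∀ x ∈ Metric.ball s 1,
      HasDerivAt (gbKernel σ a b c · t) (-(t * gbKernel σ a b c x t)) x := by
    refine ae_of_all _ fun t x _ => ?_
    have hfun : (gbKernel σ a b c · t) = fun x => gbKernel σ a b c 0 t * exp (-x * t) :=
      funext fun _ => gbKernel_eq_mul_exp
    rw [hfun]
    refine (((hasDerivAt_id' x).neg.mul_const t).exp.const_mul _).congr_deriv ?_
    rw [gbKernel_eq_mul_exp (s := x), Pi.neg_apply]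
    ring
  rw [← integral_neg]
  exact (hasDerivAt_integral_of_dominated_loc_of_deriv_le (Metric.ball_mem_nhds s one_pos)
    (Eventually.of_forall fun _ => (integrableOn_gbKernel ha hb hσ1).aestronglyMeasurable)
    (integrableOn_gbKernel ha hb hσ1)
    (integrableOn_mul_gbKernel (by linarith) hb hσ1).neg.aestronglyMeasurable hbound
    ((integrableOn_gbKernel ha hb hσ1).const_mul _) hderiv).2

variable {α β γ : ℝ}

lemma weight_mul_gbKernel_eq (hσ1 : σ < 1) (ht : t ∈ Ioo (0 : ℝ) 1) :
    (α - (β - 1) * t / (1 - t) + γ * σ * t / (1 - σ * t)) * gbKernel σ (α - 1) (β - 1) (-γ) s t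
      = gbKernelDeriv σ α (β - 1) (-γ) s t + s * (t * gbKernel σ (α - 1) (β - 1) (-γ) s t) := by
  have h0 : t ≠ 0 := ht.1.ne'
  have h1 : 1 - t ≠ 0 := by linarith [ht.2]
  have h2 := (one_sub_mul_pos_of_mem_Icc hσ1 (Ioo_subset_Icc_self ht)).ne'
  simp only [gbKernelDeriv, gbKernel, rpow_sub_one h0, rpow_sub_one h1, rpow_sub_one h2]
  field_simp
  ring

lemma integrableOn_weight_mul_gbKernel (hα : 0 < α) (hβ : 1 < β) (hσ1 : σ < 1) :
    IntegrableOn (fun t => (α - (β - 1) * t / (1 - t) + γ * σ * t / (1 - σ * t)) *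
      gbKernel σ (α - 1) (β - 1) (-γ) s t) (Ioo 0 1) :=
  ((integrableOn_gbKernelDeriv hα (by linarith) hσ1).add
    ((integrableOn_mul_gbKernel (by linarith) (by linarith) hσ1).const_mul s)).congr_fun
    (fun _ ht => (weight_mul_gbKernel_eq hσ1 ht).symm) measurableSet_Ioo

lemma integral_weight_mul_gbKernel (hα : 0 < α) (hβ : 1 < β) (hσ1 : σ < 1) :
    ∫ t in Ioo 0 1, (α - (β - 1) * t / (1 - t) + γ * σ * t / (1 - σ * t)) *
      gbKernel σ (α - 1) (β - 1) (-γ) s t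
      = s * ∫ t in Ioo 0 1, t * gbKernel σ (α - 1) (β - 1) (-γ) s t := by
  rw [setIntegral_congr_fun measurableSet_Ioo fun _ ht => weight_mul_gbKernel_eq hσ1 ht,
    integral_add (integrableOn_gbKernelDeriv hα (by linarith) hσ1)
      ((integrableOn_mul_gbKernel (by linarith) (by linarith) hσ1).const_mul s),
    integral_gbKernelDeriv hα (by linarith) hσ1, integral_const_mul, zero_add]

end

theorem stmt17_general (α β σ γ : ℝ) (hα : 0 < α) (hβ : 1 < β)
    (hσ1 : σ < 1)
    (f : ℝ → ℝ → ℝ)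
    (hf : ∀ s t : ℝ, f s t =
      t ^ (α - 1) * (1 - t) ^ (β - 1) * (1 - σ * t) ^ (-γ) * Real.exp (-s * t))
    (G : ℝ → ℝ)
    (hG : ∀ s : ℝ, G s = ∫ t in Set.Ioo (0 : ℝ) 1, f s t) :
    DifferentiableOn ℝ G (Set.Ioi (0 : ℝ)) ∧
    (∀ s > (0 : ℝ),
      IntegrableOn (fun t => f s t) (Set.Ioo (0 : ℝ) 1) ∧
      IntegrableOn
        (fun t => (α - (β - 1) * t / (1 - t) + γ * σ * t / (1 - σ * t)) * f s t)
        (Set.Ioo (0 : ℝ) 1) ∧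
      -deriv G s = (1 / s) *
        ∫ t in Set.Ioo (0 : ℝ) 1,
          (α - (β - 1) * t / (1 - t) + γ * σ * t / (1 - σ * t)) * f s t) := by
  obtain rfl : f = gbKernel σ (α - 1) (β - 1) (-γ) := funext₂ hf
  obtain rfl : G = fun x => ∫ t in Ioo 0 1, gbKernel σ (α - 1) (β - 1) (-γ) x t := funext hG
  have hderiv := hasDerivAt_integral_gbKernel (a := α - 1) (b := β - 1) (c := -γ)
    (by linarith) (by linarith) hσ1
  refine ⟨fun s _ => (hderiv s).differentiableAt.differentiableWithinAt, fun s hs =>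
    ⟨integrableOn_gbKernel (by linarith) (by linarith) hσ1,
      integrableOn_weight_mul_gbKernel hα hβ hσ1, ?_⟩⟩
  rw [(hderiv s).deriv, neg_neg, integral_weight_mul_gbKernel hα hβ hσ1, one_div,
    inv_mul_cancel_left₀ hs.ne']

theorem stmt17 (α β σ γ : ℝ) (hα : 0 < α) (hβ : 1 < β)
    (hσ0 : 0 < σ) (hσ1 : σ < 1)
    (f : ℝ → ℝ → ℝ)
    (hf : ∀ s t : ℝ, f s t =
      t ^ (α - 1) * (1 - t) ^ (β - 1) * (1 - σ * t) ^ (-γ) * Real.exp (-s * t))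
    (G : ℝ → ℝ)
    (hG : ∀ s : ℝ, G s = ∫ t in Set.Ioo (0 : ℝ) 1, f s t) :
    DifferentiableOn ℝ G (Set.Ioi (0 : ℝ)) ∧
    (∀ s > (0 : ℝ),
      IntegrableOn (fun t => f s t) (Set.Ioo (0 : ℝ) 1) ∧
      IntegrableOn
        (fun t => (α - (β - 1) * t / (1 - t) + γ * σ * t / (1 - σ * t)) * f s t)
        (Set.Ioo (0 : ℝ) 1) ∧
      -deriv G s = (1 / s) *
        ∫ t in Set.Ioo (0 : ℝ) 1,
          (α - (β - 1) * t / (1 - t) + γ * σ * t / (1 - σ * t)) * f s t) :=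
  stmt17_general α β σ γ hα hβ hσ1 f hf G hG
end
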